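/- arXiv:1310.4312 — 2 statements merged into one kernel-verified Lean document; each statement's English description precedes it below -/
import Mathlib

section
/- For every finite sequence f^1,...,f^n in H^p with 0 < p ≤ 2, one has ‖(∑_{i=1}^n |f^i|^p)^{1/p}‖_{H^p} ≤ (∑_{i=1}^n ‖f^i‖_{H^p}^p)^{1/p}; i.e. H^p is p-convex with constant 1. -/
open MeasureTheory

/-- Dyadic intervals of `[0,1)`: level `n` and position `k < 2^n`. -/
abbrev DyadicI : Type := (n : ℕ) × Fin (2 ^ n)

/-- The subinterval of `[0,1)` corresponding to a dyadic index. -/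
noncomputable def dySet (I : DyadicI) : Set ℝ :=
  Set.Ico ((I.2 : ℝ) / 2 ^ I.1) (((I.2 : ℝ) + 1) / 2 ^ I.1)

/-- Length `|I| = 2^{-n}` of a dyadic interval. -/
noncomputable def dyLen (I : DyadicI) : ℝ := ((2 : ℝ) ^ I.1)⁻¹

/-- The `L^∞`-normalized Haar function of `I`. -/
noncomputable def haar (I : DyadicI) (t : ℝ) : ℝ :=
  (Set.Ico ((I.2 : ℝ) / 2 ^ I.1) (((I.2 : ℝ) + 1 / 2) / 2 ^ I.1)).indicator 1 t
    - (Set.Ico (((I.2 : ℝ) + 1 / 2) / 2 ^ I.1) (((I.2 : ℝ) + 1) / 2 ^ I.1)).indicator 1 t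

/-- Square function `S(f)(t) = (∑_I x_I² 1_I(t))^{1/2}`. -/
noncomputable def sqF (x : DyadicI → ℝ) (t : ℝ) : ℝ :=
  Real.sqrt (∑' I : DyadicI, (x I) ^ 2 * (dySet I).indicator 1 t)

/-- The dyadic Hardy space (quasi-)norm `‖f‖_{H^p} = ‖S(f)‖_{L^p[0,1]}`. -/
noncomputable def hpNorm (p : ℝ) (x : DyadicI → ℝ) : ℝ :=
  (∫ t in Set.Ioo (0 : ℝ) 1, sqF x t ^ p) ^ (1 / p)

/-- `‖f‖_{L²}² = ∑_I x_I² |I|`. -/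
noncomputable def l2Norm (x : DyadicI → ℝ) : ℝ :=
  Real.sqrt (∑' I : DyadicI, (x I) ^ 2 * dyLen I)

/-- Sup norm of the square function. -/
noncomputable def supSqF (x : DyadicI → ℝ) : ℝ := ⨆ t : ℝ, sqF x t

/-- Restriction of the coefficient sequence to a block `G ⊆ D`. -/
noncomputable def restr (G : Set DyadicI) (x : DyadicI → ℝ) : DyadicI → ℝ :=
  G.indicator x

open scoped ENNReal

/-!
With `q = 2 / p ≥ 1`, `S(x)(t) ^ p` is the `ℓ^q`-norm of the sequence `(|x_I| ^ p 1_I(t))_I`,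
and the sequence attached to `g = (∑ |f^i| ^ p) ^ (1/p)` is the sum over `i` of those attached
to the `f^i`. Minkowski's inequality in `ℓ^q` therefore gives `S(g)(t) ^ p ≤ ∑ S(f^i)(t) ^ p`
pointwise, and integrating over `(0, 1)` gives the claim. The `ℓ^q` estimates are made in `ℝ≥0∞`,
where a non-summable series is `∞` instead of the junk value `0` of a real `tsum`.
-/

theorem ENNReal.tsum_rpow_finsetSum_le {α ι : Type*} (s : Finset ι) (A : ι → α → ℝ≥0∞) {q : ℝ}
    (hq : 1 ≤ q) :
    (∑' a, (∑ i ∈ s, A i a) ^ q) ^ (1 / q) ≤ ∑ i ∈ s, (∑' a, A i a ^ q) ^ (1 / q) := by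
  let _ : MeasurableSpace α := ⊤
  have := eLpNorm'_sum_le (μ := Measure.count) (f := A) (s := s)
    (fun i _ => (measurable_from_top (f := A i)).aestronglyMeasurable) hq
  simpa [eLpNorm', lintegral_count, Finset.sum_apply] using this

theorem ENNReal.tsum_sq_rpow_le_sum {α ι : Type*} (s : Finset ι) (y : ι → α → ℝ≥0∞) {p : ℝ}
    (hp0 : 0 < p) (hp2 : p ≤ 2) :
    (∑' a, ((∑ i ∈ s, y i a ^ p) ^ (1 / p)) ^ 2) ^ (p / 2) ≤
      ∑ i ∈ s, (∑' a, y i a ^ 2) ^ (p / 2) := by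
  have hq : 1 ≤ 2 / p := (one_le_div hp0).2 hp2
  have hpq : p / 2 = 1 / (2 / p) := (one_div_div 2 p).symm
  have hsq : ∀ z : ℝ≥0∞, z ^ 2 = (z ^ p) ^ (2 / p) := fun z => by
    rw [← ENNReal.rpow_mul, mul_div_cancel₀ _ hp0.ne', ENNReal.rpow_two]
  have hsum : ∀ z : ℝ≥0∞, (z ^ (1 / p)) ^ 2 = z ^ (2 / p) := fun z => by
    rw [← ENNReal.rpow_two, ← ENNReal.rpow_mul, one_div_mul_eq_div]
  simp only [hsum, hsq, hpq]
  exact ENNReal.tsum_rpow_finsetSum_le s (fun i a => y i a ^ p) hq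

theorem ENNReal.le_rpow_sum_rpow {ι : Type*} {s : Finset ι} {y : ι → ℝ≥0∞} {i : ι} (hi : i ∈ s)
    {p : ℝ} (hp : 0 < p) : y i ≤ (∑ j ∈ s, y j ^ p) ^ (1 / p) := by
  calc y i = (y i ^ p) ^ (1 / p) := by
        rw [← ENNReal.rpow_mul, mul_one_div_cancel hp.ne', ENNReal.rpow_one]
    _ ≤ (∑ j ∈ s, y j ^ p) ^ (1 / p) := by
      gcongr
      exact Finset.single_le_sum (f := fun j => y j ^ p) (fun _ _ => zero_le) hi

theorem ENNReal.toReal_le_sum_toReal {ι : Type*} {s : Finset ι} {L : ℝ≥0∞} {R : ι → ℝ≥0∞}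
    (h : L ≤ ∑ i ∈ s, R i) (hR : ∀ i ∈ s, R i ≤ L) : L.toReal ≤ ∑ i ∈ s, (R i).toReal := by
  by_cases hL : L = ∞
  · simp only [hL, ENNReal.toReal_top]
    positivity
  have hRfin : ∀ i ∈ s, R i ≠ ∞ := fun i hi => ne_top_of_le_ne_top hL (hR i hi)
  rw [← ENNReal.toReal_sum hRfin]
  exact ENNReal.toReal_mono (ENNReal.sum_ne_top.2 hRfin) h

theorem Real.sqrt_tsum_sq_rpow {α : Type*} (u : α → ℝ) (p : ℝ) :
    √(∑' a, u a ^ 2) ^ p = ((∑' a, ‖u a‖ₑ ^ 2) ^ (p / 2)).toReal := by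
  have hsum : (∑' a, ‖u a‖ₑ ^ 2).toReal = ∑' a, u a ^ 2 := by
    rw [ENNReal.tsum_toReal_eq fun a => ENNReal.pow_ne_top enorm_ne_top]
    simp [ENNReal.toReal_pow, toReal_enorm, sq_abs]
  rw [← ENNReal.toReal_rpow, hsum, Real.sqrt_eq_rpow,
    ← Real.rpow_mul (tsum_nonneg fun a => sq_nonneg _), one_div_mul_eq_div]

theorem Real.sqrt_tsum_sq_rpow_le_sum {α ι : Type*} (s : Finset ι) (x : ι → α → ℝ) {p : ℝ}
    (hp0 : 0 < p) (hp2 : p ≤ 2) :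
    √(∑' a, ((∑ i ∈ s, |x i a| ^ p) ^ (1 / p)) ^ 2) ^ p ≤ ∑ i ∈ s, √(∑' a, x i a ^ 2) ^ p := by
  have hnorm : ∀ a, ‖(∑ i ∈ s, |x i a| ^ p) ^ (1 / p)‖ₑ = (∑ i ∈ s, ‖x i a‖ₑ ^ p) ^ (1 / p) := by
    intro a
    have hS : 0 ≤ ∑ i ∈ s, |x i a| ^ p := by positivity
    rw [Real.enorm_of_nonneg (by positivity), ← ENNReal.ofReal_rpow_of_nonneg hS (by positivity),
      ENNReal.ofReal_sum_of_nonneg (fun i _ => by positivity)]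
    simp_rw [Real.enorm_eq_ofReal_abs, ← ENNReal.ofReal_rpow_of_nonneg (abs_nonneg _) hp0.le]
  simp only [Real.sqrt_tsum_sq_rpow, hnorm]
  refine ENNReal.toReal_le_sum_toReal (ENNReal.tsum_sq_rpow_le_sum s _ hp0 hp2) fun i hi => ?_
  gcongr with a
  exact ENNReal.le_rpow_sum_rpow hi hp0

theorem sqF_eq_sqrt_tsum_indicator_sq (x : DyadicI → ℝ) (t : ℝ) :
    sqF x t = √(∑' I, (dySet I).indicator (fun _ => x I) t ^ 2) := by
  unfold sqF
  congr 1
  refine tsum_congr fun I => ?_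
  by_cases ht : t ∈ dySet I <;> simp [ht]

theorem sqF_lpSum_rpow_le {ι : Type*} [Fintype ι] (x : ι → DyadicI → ℝ) {p : ℝ} (hp0 : 0 < p)
    (hp2 : p ≤ 2) (t : ℝ) :
    sqF (fun I => (∑ i, |x i I| ^ p) ^ (1 / p)) t ^ p ≤ ∑ i, sqF (x i) t ^ p := by
  have hind : ∀ I, (dySet I).indicator (fun _ => (∑ i, |x i I| ^ p) ^ (1 / p)) t =
      (∑ i, |(dySet I).indicator (fun _ => x i I) t| ^ p) ^ (1 / p) := by
    intro I
    by_cases ht : t ∈ dySet I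
    · simp [ht]
    · simp [ht, Real.zero_rpow hp0.ne', Real.zero_rpow (inv_pos.2 hp0).ne']
  simp only [sqF_eq_sqrt_tsum_indicator_sq, hind]
  exact Real.sqrt_tsum_sq_rpow_le_sum _ _ hp0 hp2

theorem sqF_rpow_nonneg (x : DyadicI → ℝ) (t p : ℝ) : 0 ≤ sqF x t ^ p := by
  unfold sqF
  positivity

theorem hpNorm_rpow {p : ℝ} (hp : p ≠ 0) (x : DyadicI → ℝ) :
    hpNorm p x ^ p = ∫ t in Set.Ioo (0 : ℝ) 1, sqF x t ^ p := by
  rw [hpNorm, ← Real.rpow_mul (integral_nonneg fun t => sqF_rpow_nonneg x t p),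
    one_div_mul_cancel hp, Real.rpow_one]

/-- `H^p`, `0 < p ≤ 2`, is `p`-convex with constant 1:
`‖(∑ |f^i|^p)^{1/p}‖_{H^p} ≤ (∑ ‖f^i‖_{H^p}^p)^{1/p}`. -/
theorem hp_p_convex (p : ℝ) (hp0 : 0 < p) (hp2 : p ≤ 2) (n : ℕ) (f : Fin n → DyadicI → ℝ)
    (hf : ∀ i, Integrable (fun t => sqF (f i) t ^ p) (volume.restrict (Set.Ioo (0 : ℝ) 1))) :
    hpNorm p (fun I => (∑ i, |f i I| ^ p) ^ (1 / p)) ≤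
      (∑ i, hpNorm p (f i) ^ p) ^ (1 / p) := by
  rw [hpNorm]
  gcongr
  · exact integral_nonneg fun t => sqF_rpow_nonneg _ t p
  calc ∫ t in Set.Ioo (0 : ℝ) 1, sqF (fun I => (∑ i, |f i I| ^ p) ^ (1 / p)) t ^ p
      ≤ ∫ t in Set.Ioo (0 : ℝ) 1, ∑ i, sqF (f i) t ^ p :=
        integral_mono_of_nonneg (.of_forall fun t => sqF_rpow_nonneg _ t p)
          (integrable_finsetSum _ fun i _ => hf i) (.of_forall (sqF_lpSum_rpow_le f hp0 hp2))
    _ = ∑ i, hpNorm p (f i) ^ p := by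
        rw [integral_finsetSum _ fun i _ => hf i]
        simp only [hpNorm_rpow hp0.ne']
end

section
/- Let 1 < p ≤ q < ∞, θ = (q/(q−1))·((p−1)/p), and let ω = (ω_I)_{I∈D} be nonnegative with ∑_I ω_I ≤ 1. Define y_I = (ω_I/|I|)^{1/q}. Then ‖y‖_{f_q^q} ≤ 1, and for every z = (z_I) ∈ f_q^q with ‖z‖_{f_q^q} ≤ 1 one has (∑_I |y_I|^{−qθ} |z_I|^{qθ} ω_I)^{1/q} ≤ 1 (interpreting terms with ω_I = 0 as 0). -/
open MeasureTheory

/-- `q`-variation `S_q(u)(t) = (∑_I |x_I|^q 1_I(t))^{1/q}`. -/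
noncomputable def qvar (q : ℝ) (x : DyadicI → ℝ) (t : ℝ) : ℝ :=
  (∑' I : DyadicI, |x I| ^ q * (dySet I).indicator 1 t) ^ (1 / q)

/-- The Triebel–Lizorkin (quasi-)norm `‖u‖_{f_p^q} = ‖S_q(u)‖_{L^p[0,1]}`. -/
noncomputable def fpqNorm (p q : ℝ) (x : DyadicI → ℝ) : ℝ :=
  (∫ t in Set.Ioo (0 : ℝ) 1, qvar q x t ^ p) ^ (1 / p)

/-- Sup norm of the `q`-variation. -/
noncomputable def supQvar (q : ℝ) (x : DyadicI → ℝ) : ℝ := ⨆ t : ℝ, qvar q x t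

/-- `‖u‖_{f_q^q} = (∑_I |x_I|^q |I|)^{1/q}`. -/
noncomputable def fqqNorm (q : ℝ) (x : DyadicI → ℝ) : ℝ :=
  (∑' I : DyadicI, |x I| ^ q * dyLen I) ^ (1 / q)

/-!
Put `a_I = ω_I` and `b_I = |z_I|^q |I|`; both sum to at most `1`. Since `|y_I|^q |I| = ω_I`,
the `I`-th term equals `a_I^{1-θ} b_I^θ`, and `1 < p ≤ q` gives `θ ∈ [0, 1]`. The weighted
AM–GM inequality bounds it by `(1-θ) a_I + θ b_I`, whose sum is at most `1`.
-/

open Set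

lemma dyLen_pos (I : DyadicI) : 0 < dyLen I := by
  unfold dyLen
  positivity

lemma hoelder_exponent_mem_Icc {p q : ℝ} (hp : 1 < p) (hpq : p ≤ q) :
    q / (q - 1) * ((p - 1) / p) ∈ Icc 0 1 := by
  have hq : 1 < q := hp.trans_le hpq
  refine ⟨by positivity, ?_⟩
  rw [div_mul_div_comm, div_le_one (by nlinarith)]
  nlinarith

lemma fqqNorm_le_one_iff {q : ℝ} (hq : 0 < q) (x : DyadicI → ℝ) :
    fqqNorm q x ≤ 1 ↔ ∑' I, |x I| ^ q * dyLen I ≤ 1 := by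
  have hS : 0 ≤ ∑' I, |x I| ^ q * dyLen I :=
    tsum_nonneg fun I => mul_nonneg (by positivity) (dyLen_pos I).le
  rw [fqqNorm, one_div, Real.rpow_inv_le_iff_of_pos hS zero_le_one hq, Real.one_rpow]

lemma abs_rpow_one_div_rpow_mul {a L q : ℝ} (ha : 0 ≤ a) (hL : 0 < L) (hq : q ≠ 0) :
    |(a / L) ^ (1 / q)| ^ q * L = a := by
  have h : 0 ≤ a / L := div_nonneg ha hL.le
  rw [abs_of_nonneg (by positivity), one_div, Real.rpow_inv_rpow h hq, div_mul_cancel₀ _ hL.ne']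

lemma abs_rpow_one_div_rpow_neg_mul {a L q θ : ℝ} (ha : 0 < a) (hL : 0 < L) (hq : q ≠ 0)
    (c : ℝ) :
    |(a / L) ^ (1 / q)| ^ (-(q * θ)) * |c| ^ (q * θ) * a = a ^ (1 - θ) * (|c| ^ q * L) ^ θ := by
  have h : 0 ≤ a / L := div_nonneg ha.le hL.le
  rw [abs_of_nonneg (by positivity), ← Real.rpow_mul h, show 1 / q * -(q * θ) = -θ by field_simp,
    Real.div_rpow ha.le hL.le, Real.rpow_neg hL.le, div_eq_mul_inv, inv_inv,
    Real.mul_rpow (by positivity) hL.le, ← Real.rpow_mul (abs_nonneg c), sub_eq_neg_add,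
    Real.rpow_add ha, Real.rpow_one]
  ring

lemma abs_rpow_one_div_rpow_neg_mul_le {a L q θ : ℝ} (ha : 0 ≤ a) (hL : 0 < L) (hq : q ≠ 0)
    (hθ : θ ∈ Icc 0 1) (c : ℝ) :
    |(a / L) ^ (1 / q)| ^ (-(q * θ)) * |c| ^ (q * θ) * a ≤ (1 - θ) * a + θ * (|c| ^ q * L) := by
  obtain ⟨hθ0, hθ1⟩ := hθ
  rcases ha.eq_or_lt with rfl | ha
  · simp only [mul_zero, zero_add]
    positivity
  rw [abs_rpow_one_div_rpow_neg_mul ha hL hq]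
  exact Real.geom_mean_le_arith_mean2_weighted (by linarith) hθ0 ha.le (by positivity) (by ring)

lemma tsum_le_one_of_le_convex_comb {ι : Type*} {f a b : ι → ℝ} {θ : ℝ} (hθ : θ ∈ Icc 0 1)
    (hf : ∀ i, 0 ≤ f i) (hfab : ∀ i, f i ≤ (1 - θ) * a i + θ * b i)
    (ha : Summable a) (hb : Summable b) (ha1 : ∑' i, a i ≤ 1) (hb1 : ∑' i, b i ≤ 1) :
    ∑' i, f i ≤ 1 := by
  obtain ⟨hθ0, hθ1⟩ := hθ
  have hab : Summable fun i => (1 - θ) * a i + θ * b i := (ha.mul_left _).add (hb.mul_left _)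
  calc ∑' i, f i
      ≤ ∑' i, ((1 - θ) * a i + θ * b i) := (hab.of_nonneg_of_le hf hfab).tsum_le_tsum hfab hab
    _ = (1 - θ) * ∑' i, a i + θ * ∑' i, b i := by
      rw [(ha.mul_left _).tsum_add (hb.mul_left _), tsum_mul_left, tsum_mul_left]
    _ ≤ (1 - θ) * 1 + θ * 1 := by gcongr
    _ = 1 := by ring

/-- For a nonnegative weight `ω` with `∑ ω_I ≤ 1` and
`y_I = (ω_I/|I|)^{1/q}`, one has `‖y‖_{f_q^q} ≤ 1`, and for every `z` with `‖z‖_{f_q^q} ≤ 1`,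
`(∑ |y_I|^{-qθ}|z_I|^{qθ} ω_I)^{1/q} ≤ 1`, where `θ = (q/(q-1))((p-1)/p)`,
`1 < p ≤ q < ∞`. -/
theorem hoelder_weight_estimate (p q θ : ℝ) (hp : 1 < p) (hpq : p ≤ q)
    (hθ : θ = q / (q - 1) * ((p - 1) / p))
    (ω : DyadicI → ℝ) (hω0 : ∀ I, 0 ≤ ω I) (hωs : Summable ω)
    (hω1 : ∑' I : DyadicI, ω I ≤ 1)
    (y : DyadicI → ℝ) (hy : ∀ I, y I = (ω I / dyLen I) ^ (1 / q)) :
    fqqNorm q y ≤ 1 ∧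
      ∀ z : DyadicI → ℝ, Summable (fun I => |z I| ^ q * dyLen I) → fqqNorm q z ≤ 1 →
        (∑' I : DyadicI, |y I| ^ (-(q * θ)) * |z I| ^ (q * θ) * ω I) ^ (1 / q) ≤ 1 := by
  have hq : 0 < q := by linarith
  have hθI : θ ∈ Icc 0 1 := hθ ▸ hoelder_exponent_mem_Icc hp hpq
  have hyω (I : DyadicI) : |y I| ^ q * dyLen I = ω I := by
    rw [hy I, abs_rpow_one_div_rpow_mul (hω0 I) (dyLen_pos I) hq.ne']
  refine ⟨(fqqNorm_le_one_iff hq y).2 (by rwa [tsum_congr hyω]), fun z hzs hz1 => ?_⟩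
  have hterm (I : DyadicI) : 0 ≤ |y I| ^ (-(q * θ)) * |z I| ^ (q * θ) * ω I := by
    have := hω0 I
    positivity
  refine Real.rpow_le_one (tsum_nonneg hterm) ?_ (by positivity)
  refine tsum_le_one_of_le_convex_comb hθI hterm (fun I => ?_) hωs hzs hω1
    ((fqqNorm_le_one_iff hq z).1 hz1)
  rw [hy I]
  exact abs_rpow_one_div_rpow_neg_mul_le (hω0 I) (dyLen_pos I) hq.ne' hθI (z I)
end
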